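/- arXiv:0911.2039 — 2 statements merged into one kernel-verified Lean document; each statement's English description precedes it below -/
import Mathlib

section
/- For a strict partition σ with at most n parts each at most n, define σ̃^i = σ^i + #{j : j ≤ i < j + σ^j} for 1 ≤ i ≤ n. Then σ̃ = (σ̃^1 ≥ σ̃^2 ≥ … ≥ σ̃^n) is a (weak) partition with largest part σ̃^1 ≤ n+1. -/
/-- `σ` is a strict partition with at most `n` parts, each at most `n`:
`σ 1 > σ 2 > … > σ k > 0` with `σ 1 ≤ n`, `k ≤ n`, and `σ j = 0` for `j > k`
(the value `σ 0` is irrelevant). -/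
def IsStrictPartitionLe (n : ℕ) (σ : ℕ → ℕ) : Prop :=
  (∀ i, 1 ≤ i → σ i ≤ n) ∧
    (∀ i, 1 ≤ i → 0 < σ (i + 1) → σ (i + 1) < σ i) ∧
    (∀ i, 1 ≤ i → σ i = 0 → σ (i + 1) = 0) ∧
    (∀ i, n < i → σ i = 0)

/-- `#{j ∈ ℕ : j ≤ i < j + σ j}` (with `j ≥ 1`). -/
def countC (σ : ℕ → ℕ) (i : ℕ) : ℕ :=
  ((Finset.Icc 1 i).filter (fun j => i < j + σ j)).card

/-- `σ̄ i = σ i - i + #{j : j ≤ i < j + σ j}`, an integer. -/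
def barSigma (σ : ℕ → ℕ) (i : ℕ) : ℤ :=
  (σ i : ℤ) - i + countC σ i

/-- `σ̃ i = σ i + #{j : j ≤ i < j + σ j}`. -/
def tildeSigma (σ : ℕ → ℕ) (i : ℕ) : ℕ :=
  σ i + countC σ i

lemma countC_succ_le (σ : ℕ → ℕ) (i : ℕ) :
    countC σ (i + 1) ≤ countC σ i + 1 := by
  unfold countC
  calc ((Finset.Icc 1 (i+1)).filter (fun j => i + 1 < j + σ j)).card
      ≤ (insert (i+1) ((Finset.Icc 1 i).filter (fun j => i < j + σ j))).card := by
        apply Finset.card_le_card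
        intro j hj
        simp only [Finset.mem_filter, Finset.mem_Icc] at hj
        simp only [Finset.mem_insert, Finset.mem_filter, Finset.mem_Icc]
        rcases eq_or_lt_of_le hj.1.2 with h | h
        · exact Or.inl h
        · exact Or.inr ⟨⟨hj.1.1, Nat.lt_succ_iff.mp h⟩, by omega⟩
    _ ≤ _ := Finset.card_insert_le _ _

lemma countC_succ_le_of_zero (σ : ℕ → ℕ) (i : ℕ) (h : σ (i + 1) = 0) :
    countC σ (i + 1) ≤ countC σ i := by
  apply Finset.card_le_card
  intro j hj
  simp only [Finset.mem_filter, Finset.mem_Icc] at hj ⊢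
  rcases eq_or_lt_of_le hj.1.2 with he | hl
  · exfalso; rw [he, h] at hj; omega
  · exact ⟨⟨hj.1.1, Nat.lt_succ_iff.mp hl⟩, by omega⟩

theorem tildeSigma_is_partition (n : ℕ) (hn : 0 < n) (σ : ℕ → ℕ)
    (hσ : IsStrictPartitionLe n σ) :
    (∀ i, 1 ≤ i → i < n → tildeSigma σ (i + 1) ≤ tildeSigma σ i) ∧
      tildeSigma σ 1 ≤ n + 1 := by
  obtain ⟨hle, hstrict, hzero, hbig⟩ := hσ
  constructor
  · intro i hi hin
    unfold tildeSigma
    by_cases h : 0 < σ (i + 1)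
    · have h1 : σ (i + 1) < σ i := hstrict i hi h
      have h2 := countC_succ_le σ i
      omega
    · have h0 : σ (i + 1) = 0 := by omega
      have h2 := countC_succ_le_of_zero σ i h0
      omega
  · unfold tildeSigma
    have h1 : σ 1 ≤ n := hle 1 le_rfl
    have hc : countC σ 1 ≤ 1 := by
      unfold countC
      calc _ ≤ (Finset.Icc 1 1).card := Finset.card_filter_le _ _
        _ = 1 := by simp
    omega
end

section
/- The map σ ↦ σ̃ from strict partitions with at most n parts each of size at most n to partitions fitting in an n × (n+1) box is injective. -/
lemma add_mono_aux {n : ℕ} {σ : ℕ → ℕ} (hσ : IsStrictPartitionLe n σ) :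
    ∀ i j, 1 ≤ j → j ≤ i → 0 < σ i → i + σ i ≤ j + σ j := by
  intro i
  induction i with
  | zero => intro j hj hji _; omega
  | succ i ih =>
    intro j hj hji hpos
    rcases Nat.eq_or_lt_of_le hji with rfl | hlt
    · exact le_refl _
    · have hji' : j ≤ i := Nat.lt_succ_iff.mp hlt
      have hi1 : 1 ≤ i := le_trans hj hji'
      have hdec : σ (i + 1) < σ i := hσ.2.1 i hi1 hpos
      have hposi : 0 < σ i := lt_trans hpos hdec
      have := ih j hj hji' hposi
      omega

lemma countC_of_pos {n : ℕ} {σ : ℕ → ℕ} (hσ : IsStrictPartitionLe n σ)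
    {i : ℕ} (hi : 1 ≤ i) (hpos : 0 < σ i) : countC σ i = i := by
  unfold countC
  have heq : (Finset.Icc 1 i).filter (fun j => i < j + σ j) = Finset.Icc 1 i := by
    apply Finset.filter_true_of_mem
    intro j hj
    rw [Finset.mem_Icc] at hj
    have := add_mono_aux hσ i j hj.1 hj.2 hpos
    omega
  rw [heq, Nat.card_Icc]; omega

lemma countC_lt_of_zero {σ : ℕ → ℕ} {i : ℕ} (hi : 1 ≤ i) (hz : σ i = 0) :
    countC σ i < i := by
  unfold countC
  have hss : (Finset.Icc 1 i).filter (fun j => i < j + σ j) ⊂ Finset.Icc 1 i := by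
    rw [Finset.filter_ssubset]
    exact ⟨i, by simp [Finset.mem_Icc, hi], by omega⟩
  have := Finset.card_lt_card hss
  rw [Nat.card_Icc] at this
  omega

theorem tildeSigma_injective (n : ℕ) (hn : 0 < n) (σ τ : ℕ → ℕ)
    (hσ : IsStrictPartitionLe n σ) (hτ : IsStrictPartitionLe n τ)
    (h : ∀ i, 1 ≤ i → i ≤ n → tildeSigma σ i = tildeSigma τ i) :
    ∀ i, 1 ≤ i → σ i = τ i := by
  intro i hi
  by_cases hin : i ≤ n
  · have heq := h i hi hin
    unfold tildeSigma at heq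
    by_cases hsp : 0 < σ i <;> by_cases htp : 0 < τ i
    · have c1 := countC_of_pos hσ hi hsp
      have c2 := countC_of_pos hτ hi htp
      omega
    · have c1 := countC_of_pos hσ hi hsp
      have c2 := countC_lt_of_zero hi (by omega : τ i = 0)
      omega
    · have c1 := countC_lt_of_zero hi (by omega : σ i = 0)
      have c2 := countC_of_pos hτ hi htp
      omega
    · omega
  · have h1 := hσ.2.2.2 i (by omega)
    have h2 := hτ.2.2.2 i (by omega)
    omega
end
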